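/- Let m be a power of two and n = m/2. The power basis 1, ζ_m, ζ_m², ..., ζ_m^{n-1} of ℤ[ζ_m] is orthogonal with respect to the Minkowski inner product ⟨α, β⟩ = Σ_σ σ(α)·conj(σ(β)) (sum over all complex embeddings σ of ℚ(ζ_m)), and each basis vector has squared norm n. In particular ⟨ζ_m^i, ζ_m^j⟩ = 0 for 0 ≤ i < j ≤ n-1. -/

import Mathlib

/-!
Since `σ ζ` has modulus one, `conj (σ (ζ ^ j)) = σ (ζ ^ j)⁻¹`, so `⟨ζ ^ i, ζ ^ j⟩` is the sum of
`σ (ζ ^ i / ζ ^ j)` over all embeddings. For `i = j` this counts the `φ(m) = n` embeddings. For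
`i < j ≤ n - 1`, `η = ζ ^ i / ζ ^ j` is a root of unity of order `k = 2 ^ t` with `t ≥ 2`, so
`ζ ↦ ζ ^ (1 + k / 2)` is a Galois automorphism (the exponent is odd) and it sends `η` to
`η · η ^ (k / 2) = -η`. Precomposing with an automorphism permutes the embeddings, so the sum equals
its own negative and vanishes.
-/

open Polynomial

theorem sum_ringHom_apply_ringEquiv {K A : Type*} [NonAssocSemiring K] [NonAssocSemiring A]
    [Fintype (K →+* A)] (e : K ≃+* K) (x : K) :
    ∑ σ : K →+* A, σ (e x) = ∑ σ : K →+* A, σ x :=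
  Fintype.sum_equiv
    { toFun := fun σ => σ.comp e.toRingHom
      invFun := fun σ => σ.comp e.symm.toRingHom
      left_inv := fun σ => by ext; simp
      right_inv := fun σ => by ext; simp }
    _ _ fun _ => rfl

theorem sum_ringHom_eq_zero_of_ringEquiv_apply_eq_neg {K A : Type*} [Ring K] [Ring A]
    [NoZeroDivisors A] [CharZero A] [Fintype (K →+* A)] (e : K ≃+* K) {x : K} (hx : e x = -x) :
    ∑ σ : K →+* A, σ x = 0 := by
  refine CharZero.eq_neg_self_iff.1 ?_
  calc ∑ σ : K →+* A, σ x = ∑ σ : K →+* A, σ (e x) := (sum_ringHom_apply_ringEquiv e x).symm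
    _ = -∑ σ : K →+* A, σ x := by simp only [hx, map_neg, Finset.sum_neg_distrib]

theorem IsPrimitiveRoot.exists_algEquiv_apply_eq_pow {F L : Type*} [Field F] [Field L] [Algebra F L]
    {m : ℕ} [NeZero m] [IsCyclotomicExtension {m} F L] (hirr : Irreducible (cyclotomic m F)) {ζ : L}
    (hζ : IsPrimitiveRoot ζ m) {u : ℕ} (hu : u.Coprime m) : ∃ φ : L ≃ₐ[F] L, φ ζ = ζ ^ u := by
  have := IsCyclotomicExtension.neZero' m F L
  have hζu := hζ.pow_of_coprime u hu
  refine ⟨(hζ.powerBasis F).equivOfMinpoly (hζu.powerBasis F) ?_, ?_⟩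
  · rw [IsPrimitiveRoot.powerBasis_gen, IsPrimitiveRoot.powerBasis_gen,
      ← hζ.minpoly_eq_cyclotomic_of_irreducible hirr,
      ← hζu.minpoly_eq_cyclotomic_of_irreducible hirr]
  · simpa only [IsPrimitiveRoot.powerBasis_gen] using
      (hζ.powerBasis F).equivOfMinpoly_gen (hζu.powerBasis F) _

theorem exists_algEquiv_apply_eq_neg_of_pow_two_pow_eq_one {F L : Type*} [Field F] [Field L]
    [Algebra F L] {m N : ℕ} (hm : m = 2 ^ N) [IsCyclotomicExtension {m} F L]
    (hirr : Irreducible (cyclotomic m F)) {ζ η : L} (hζ : IsPrimitiveRoot ζ m) (hη : η ^ m = 1)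
    (hη2 : η ^ 2 ≠ 1) : ∃ φ : L ≃ₐ[F] L, φ η = -η := by
  subst hm
  have : NeZero (2 ^ N) := ⟨by positivity⟩
  obtain ⟨e, -, rfl⟩ := hζ.eq_pow_of_pow_eq_one hη
  obtain ⟨t, -, hk⟩ := (Nat.dvd_prime_pow Nat.prime_two).1 (orderOf_dvd_of_pow_eq_one hη)
  obtain ⟨s, rfl⟩ : ∃ s, t = s + 2 := by
    refine ⟨t - 2, (Nat.sub_add_cancel ?_).symm⟩
    by_contra! ht
    have : orderOf (ζ ^ e) ∣ 2 ^ 1 := hk ▸ Nat.pow_dvd_pow 2 (by omega)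
    exact hη2 (orderOf_dvd_iff_pow_eq_one.1 this)
  have hk' : orderOf (ζ ^ e) = 2 * 2 ^ (s + 1) := by rw [hk]; ring
  have hhalf : (ζ ^ e) ^ 2 ^ (s + 1) = -1 := by
    have := (hk' ▸ IsPrimitiveRoot.orderOf (ζ ^ e)).pow_of_dvd (by positivity) (dvd_mul_left _ _)
    rw [Nat.mul_div_cancel _ (by positivity)] at this
    exact this.eq_neg_one_of_two_right
  have hu : (1 + 2 ^ (s + 1)).Coprime (2 ^ N) := by
    refine Nat.Coprime.pow_right _ (Nat.coprime_two_right.2 ?_)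
    simp [parity_simps]
  obtain ⟨φ, hφ⟩ := hζ.exists_algEquiv_apply_eq_pow hirr hu
  refine ⟨φ, ?_⟩
  rw [map_pow, hφ, ← pow_mul, mul_comm, pow_mul, pow_add, pow_one, hhalf, mul_neg_one]

theorem IsPrimitiveRoot.pow_div_pow_sq_ne_one {L : Type*} [Field L] {ζ : L} {m i j : ℕ}
    (hζ : IsPrimitiveRoot ζ m) (hij : i < j) (hj : 2 * j < m) : (ζ ^ i / ζ ^ j) ^ 2 ≠ 1 := by
  have hζ0 : ζ ≠ 0 := hζ.ne_zero (by omega)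
  rw [div_pow, ne_eq, div_eq_one_iff_eq (pow_ne_zero _ (pow_ne_zero _ hζ0)), ← pow_mul, ← pow_mul]
  intro h
  have := hζ.pow_inj (i := i * 2) (j := j * 2) (by omega) (by omega) h
  omega

theorem sum_ringHom_apply_mul_conj_apply {K : Type*} [DivisionRing K] [Fintype (K →+* ℂ)] (x : K)
    {y : K} {m : ℕ} (hy : y ^ m = 1) (hm : m ≠ 0) :
    ∑ σ : K →+* ℂ, σ x * starRingEnd ℂ (σ y) = ∑ σ : K →+* ℂ, σ (x / y) := by
  refine Finset.sum_congr rfl fun σ _ => ?_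
  have hσy : ‖σ y‖ = 1 := Complex.norm_eq_one_of_pow_eq_one (by rw [← map_pow, hy, map_one]) hm
  rw [← Complex.inv_eq_conj hσy, ← map_inv₀, ← map_mul, div_eq_mul_inv]

theorem stmt_7 (m : ℕ+) (hm : ∃ N : ℕ, (m : ℕ) = 2 ^ N) (hm4 : 4 ≤ (m : ℕ))
    (n : ℕ) (hn : n = (m : ℕ) / 2)
    (K : Type*) [Field K] [Algebra ℚ K] [IsCyclotomicExtension {(m : ℕ)} ℚ K] [NumberField K]
    (ζ : K) (hζ : IsPrimitiveRoot ζ (m : ℕ)) :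
    (∀ i : ℕ, i ≤ n - 1 →
      ∑ σ : K →+* ℂ, σ (ζ ^ i) * (starRingEnd ℂ) (σ (ζ ^ i)) = (n : ℂ)) ∧
    (∀ i j : ℕ, i < j → j ≤ n - 1 →
      ∑ σ : K →+* ℂ, σ (ζ ^ i) * (starRingEnd ℂ) (σ (ζ ^ j)) = 0) := by
  obtain ⟨N, hN⟩ := hm
  obtain ⟨M, rfl⟩ : ∃ M, N = M + 1 :=
    ⟨N - 1, (Nat.succ_pred_eq_of_ne_zero fun h => by rw [h, pow_zero] at hN; omega).symm⟩
  have hn' : n = 2 ^ M := by rw [hn, hN, pow_succ, Nat.mul_div_cancel _ two_pos]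
  have hirr := cyclotomic.irreducible_rat m.pos
  have hζm (i : ℕ) : (ζ ^ i) ^ (m : ℕ) = 1 := by
    rw [← pow_mul, mul_comm, pow_mul, hζ.pow_eq_one, one_pow]
  refine ⟨fun i _ => ?_, fun i j hij hj => ?_⟩
  · have hcard : Fintype.card (K →+* ℂ) = n := by
      -- `NumberField.Embeddings.card` is stated for the canonical `ℚ`-algebra structure
      rw [NumberField.Embeddings.card, Subsingleton.elim DivisionRing.toRatAlgebra ‹Algebra ℚ K›,
        IsCyclotomicExtension.finrank K hirr, hN, Nat.totient_prime_pow_succ Nat.prime_two, hn',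
        Nat.add_one_sub_one, mul_one]
    rw [sum_ringHom_apply_mul_conj_apply _ (hζm i) m.ne_zero,
      div_self (pow_ne_zero _ (hζ.ne_zero m.ne_zero))]
    simp [hcard]
  · have hη : (ζ ^ i / ζ ^ j) ^ (m : ℕ) = 1 := by rw [div_pow, hζm, hζm, div_one]
    obtain ⟨φ, hφ⟩ := exists_algEquiv_apply_eq_neg_of_pow_two_pow_eq_one hN hirr hζ hη
      (hζ.pow_div_pow_sq_ne_one hij (by omega))
    rw [sum_ringHom_apply_mul_conj_apply _ (hζm j) m.ne_zero]
    exact sum_ringHom_eq_zero_of_ringEquiv_apply_eq_neg φ.toRingEquiv hφ
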